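/- arXiv:2306.10253 — 5 statements merged into one kernel-verified Lean document; each statement's English description precedes it below -/
import Mathlib

section
/- If A and B are n×n matrices over a field F, then for every positive integer k, rank((A+B)^k) ≤ k·rank(B) + rank(A^k). -/
/-!
Expanding `(A + B)^k` one factor at a time,
`(A + B)^(j+1) A^m = (A + B)^j A^(m+1) + (A + B)^j B A^m`,
and the second summand has rank at most `rank B`. After `k` steps only `A^k` is left,
and subadditivity of rank gives the bound.
-/

namespace Matrix

variable {K : Type*} [Field K]

theorem rank_add_le {m n : Type*} [Fintype n] (A B : Matrix m n K) :
    (A + B).rank ≤ A.rank + B.rank := by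
  have hrange : LinearMap.range (A + B).mulVecLin ≤
      LinearMap.range A.mulVecLin ⊔ LinearMap.range B.mulVecLin := by
    rintro _ ⟨v, rfl⟩
    rw [mulVecLin_add, LinearMap.add_apply]
    exact Submodule.add_mem_sup (LinearMap.mem_range_self _ v) (LinearMap.mem_range_self _ v)
  exact (Submodule.finrank_mono hrange).trans
    (Submodule.finrank_add_le_finrank_add_finrank _ _)

variable {n : Type*} [Fintype n] [DecidableEq n]

theorem rank_add_pow_mul_pow_le (A B : Matrix n n K) (j m : ℕ) :
    ((A + B) ^ j * A ^ m).rank ≤ j * B.rank + (A ^ (j + m)).rank := by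
  induction j generalizing m with
  | zero => simp
  | succ j ih =>
    have hsplit : (A + B) ^ (j + 1) * A ^ m =
        (A + B) ^ j * A ^ (m + 1) + (A + B) ^ j * (B * A ^ m) := by
      rw [pow_succ, pow_succ', mul_assoc, add_mul, mul_add]
    calc ((A + B) ^ (j + 1) * A ^ m).rank
        ≤ ((A + B) ^ j * A ^ (m + 1)).rank + ((A + B) ^ j * (B * A ^ m)).rank :=
          hsplit ▸ rank_add_le _ _
      _ ≤ (j * B.rank + (A ^ (j + (m + 1))).rank) + B.rank :=
          add_le_add (ih (m + 1)) ((rank_mul_le_right _ _).trans (rank_mul_le_left _ _))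
      _ = (j + 1) * B.rank + (A ^ (j + 1 + m)).rank := by
          rw [show j + 1 + m = j + (m + 1) by omega]; ring

theorem rank_add_pow_le (A B : Matrix n n K) (k : ℕ) :
    ((A + B) ^ k).rank ≤ k * B.rank + (A ^ k).rank := by
  simpa using rank_add_pow_mul_pow_le A B k 0

end Matrix

theorem stmt_1_general {F : Type*} [Field F] {n : ℕ} (A B : Matrix (Fin n) (Fin n) F)
    (k : ℕ) :
    ((A + B) ^ k).rank ≤ k * B.rank + (A ^ k).rank :=
  Matrix.rank_add_pow_le A B k

/-- If `A` and `B` are `n×n` matrices over a field `F`, then for every positive integer `k`,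
`rank((A+B)^k) ≤ k·rank(B) + rank(A^k)`. -/
theorem stmt_1 {F : Type*} [Field F] {n : ℕ} (A B : Matrix (Fin n) (Fin n) F)
    (k : ℕ) (hk : 0 < k) :
    ((A + B) ^ k).rank ≤ k * B.rank + (A ^ k).rank :=
  stmt_1_general A B k
end

section
/- Any nonzero eigenvalue λ of a square matrix M satisfies alg_λ(M) = alg_0(M − λI), and for any positive integer k, alg_0(M^k) = alg_0(M); moreover alg_0(M) ≥ n − rank(M) for an n×n matrix M over an algebraically closed field. -/
/-! Shifting by `λ` turns the characteristic polynomial `χ(X)` into `χ(X + λ)`, which moves the root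
`λ` to `0` with the same multiplicity. For the other two claims, the multiplicity of `0` as a root
of the characteristic polynomial of an endomorphism `f` is the dimension of its generalized
`0`-eigenspace `⋃ₘ ker fᵐ`. This space is the same for `f` and `fᵏ` (`k > 0`), and it contains
`ker f`, whose dimension is `n - rank f`. -/

open Polynomial Module

namespace Module.End

theorem maxGenEigenspace_zero_pow {R M : Type*} [CommRing R] [AddCommGroup M] [Module R M]
    (f : End R M) {k : ℕ} (hk : 0 < k) :
    (f ^ k).maxGenEigenspace 0 = f.maxGenEigenspace 0 := by
  ext x
  simp only [mem_maxGenEigenspace, zero_smul, sub_zero, ← pow_mul]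
  constructor
  · rintro ⟨m, hm⟩
    exact ⟨k * m, hm⟩
  · rintro ⟨m, hm⟩
    refine ⟨m, ?_⟩
    rw [← Nat.sub_add_cancel (Nat.le_mul_of_pos_left m hk), pow_add, mul_apply, hm, map_zero]

variable {K V : Type*} [Field K] [AddCommGroup V] [Module K V] [FiniteDimensional K V]

theorem charpoly_pow_rootMultiplicity_zero (f : End K V) {k : ℕ} (hk : 0 < k) :
    (f ^ k).charpoly.rootMultiplicity 0 = f.charpoly.rootMultiplicity 0 := by
  rw [← LinearMap.finrank_maxGenEigenspace_eq, ← LinearMap.finrank_maxGenEigenspace_eq,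
    maxGenEigenspace_zero_pow f hk]

theorem finrank_sub_finrank_range_le_charpoly_rootMultiplicity_zero (f : End K V) :
    finrank K V - finrank K (LinearMap.range f) ≤ f.charpoly.rootMultiplicity 0 := by
  rw [← LinearMap.finrank_range_add_finrank_ker f, Nat.add_sub_cancel_left, ← eigenspace_zero]
  exact LinearMap.finrank_eigenspace_le f 0

end Module.End

namespace Matrix

variable {ι : Type*} [Fintype ι] [DecidableEq ι]

theorem charpoly_rootMultiplicity_eq_sub_smul_one {R : Type*} [CommRing R]
    (M : Matrix ι ι R) (μ : R) :
    M.charpoly.rootMultiplicity μ = (M - μ • (1 : Matrix ι ι R)).charpoly.rootMultiplicity 0 := by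
  rw [smul_one_eq_diagonal, ← scalar_apply, charpoly_sub_scalar,
    rootMultiplicity_eq_rootMultiplicity]

variable {K : Type*} [Field K]

theorem charpoly_pow_rootMultiplicity_zero (M : Matrix ι ι K) {k : ℕ} (hk : 0 < k) :
    (M ^ k).charpoly.rootMultiplicity 0 = M.charpoly.rootMultiplicity 0 := by
  rw [← charpoly_toLin', ← charpoly_toLin', toLin'_pow,
    Module.End.charpoly_pow_rootMultiplicity_zero _ hk]

theorem card_sub_rank_le_charpoly_rootMultiplicity_zero (M : Matrix ι ι K) :
    Fintype.card ι - M.rank ≤ M.charpoly.rootMultiplicity 0 := by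
  have := Module.End.finrank_sub_finrank_range_le_charpoly_rootMultiplicity_zero M.mulVecLin
  rwa [charpoly_mulVecLin, finrank_fintype_fun_eq_card] at this

end Matrix

theorem stmt_8_general {F : Type*} [Field F] {n : ℕ}
    (M : Matrix (Fin n) (Fin n) F) (lam : F) :
    M.charpoly.rootMultiplicity lam
      = ((M - lam • (1 : Matrix (Fin n) (Fin n) F)).charpoly).rootMultiplicity 0
    ∧ (∀ k : ℕ, 0 < k →
        ((M ^ k).charpoly).rootMultiplicity 0 = M.charpoly.rootMultiplicity 0)
    ∧ M.charpoly.rootMultiplicity 0 ≥ n - M.rank := by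
  refine ⟨M.charpoly_rootMultiplicity_eq_sub_smul_one lam,
    fun k hk => M.charpoly_pow_rootMultiplicity_zero hk, ?_⟩
  simpa using M.card_sub_rank_le_charpoly_rootMultiplicity_zero

/-- For an `n×n` matrix `M` over an algebraically closed field:
any nonzero eigenvalue `λ` of `M` satisfies `alg_λ(M) = alg_0(M − λI)`;
for any positive integer `k`, `alg_0(M^k) = alg_0(M)`; and `alg_0(M) ≥ n − rank M`. -/
theorem stmt_8 {F : Type*} [Field F] [IsAlgClosed F] {n : ℕ}
    (M : Matrix (Fin n) (Fin n) F) (lam : F) (hlam : lam ≠ 0)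
    (heig : M.charpoly.IsRoot lam) :
    M.charpoly.rootMultiplicity lam
      = ((M - lam • (1 : Matrix (Fin n) (Fin n) F)).charpoly).rootMultiplicity 0
    ∧ (∀ k : ℕ, 0 < k →
        ((M ^ k).charpoly).rootMultiplicity 0 = M.charpoly.rootMultiplicity 0)
    ∧ M.charpoly.rootMultiplicity 0 ≥ n - M.rank :=
  stmt_8_general M lam
end

section
/- For any n×n matrix C over a commutative ring and any 0 ≤ j ≤ n, the coefficient of x^j in the characteristic polynomial of C equals (−1)^{n−j} times the sum of all principal (n−j)×(n−j) minors of C. -/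
/-- For any `n×n` matrix `C` over a commutative ring and any `0 ≤ j ≤ n`, the coefficient
of `x^j` in the characteristic polynomial of `C` equals `(−1)^{n−j}` times the sum of all
principal `(n−j)×(n−j)` minors of `C`. -/
theorem stmt_9 {R : Type*} [CommRing R] {n : ℕ} (C : Matrix (Fin n) (Fin n) R)
    (j : ℕ) (hj : j ≤ n) :
    C.charpoly.coeff j
      = (-1 : R) ^ (n - j) *
        ∑ I ∈ Finset.powersetCard (n - j) (Finset.univ : Finset (Fin n)),
          (C.submatrix (fun a : {x // x ∈ I} => (a : Fin n))
            (fun a : {x // x ∈ I} => (a : Fin n))).det := by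
  have h := C.charpoly_coeff_eq_sum_minors (n - j) (by simp)
  rwa [Fintype.card_fin, Nat.sub_sub_self hj] at h
end

section
/- Let A be an n×n matrix over a field F whose rational canonical form has invariant factors p_1 | p_2 | ... | p_s, let m ≥ 1, and let q ∈ F[x] be monic of degree n with p_1·p_2···p_{max(s−m,0)} dividing q. Then there exists an n×n matrix B over F with rank(B) ≤ m such that the characteristic polynomial of A + B equals q. -/
/-!
Up to similarity, `A` is the block diagonal matrix of the companion matrices `C(p i)`. Keep the
blocks with `i < s - m`, whose characteristic polynomials multiply to a divisor `g` of `q`, and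
replace the remaining (at most `m`) blocks, listed in lexicographic order, by the single companion
matrix of `q / g`. A companion matrix is the subdiagonal shift plus a last column, and the shift of
the big companion matrix restricts to the shift of each block, so it differs from the block
diagonal of the tail blocks only in the last column of each block: the perturbation has rank at
most `m`.
-/

open Polynomial Matrix Finset

/-- The companion matrix of a monic polynomial `p` of degree `d`. -/
def companionMatrix {F : Type*} [Field F] (d : ℕ) (p : Polynomial F) :
    Matrix (Fin d) (Fin d) F :=
  Matrix.of fun i j =>
    if (j : ℕ) = d - 1 then -p.coeff i else if (i : ℕ) = (j : ℕ) + 1 then 1 else 0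

theorem Polynomial.Monic.X_pow_natDegree_modByMonic {R : Type*} [CommRing R] [Nontrivial R]
    {p : R[X]} (hp : p.Monic) : X ^ p.natDegree %ₘ p = X ^ p.natDegree - p := by
  refine (div_modByMonic_unique 1 _ hp ⟨by ring, ?_⟩).2
  have hdeg : (X ^ p.natDegree : R[X]).degree = p.degree := by
    rw [degree_X_pow, degree_eq_natDegree hp.ne_zero]
  rw [← hdeg]
  exact degree_sub_lt_left hdeg (monic_X_pow _).ne_zero (by rw [leadingCoeff_X_pow, hp])

section Companion

variable {F : Type*} [Field F] {p : F[X]}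

theorem companionMatrix_apply_of_ne {d : ℕ} (p : F[X]) {i j : Fin d} (hj : (j : ℕ) ≠ d - 1) :
    companionMatrix d p i j = if (i : ℕ) = j + 1 then 1 else 0 :=
  if_neg hj

theorem coeff_X_pow_succ_modByMonic_eq_companionMatrix (hp : p.Monic) (i j : Fin p.natDegree) :
    (X ^ ((j : ℕ) + 1) %ₘ p).coeff i = companionMatrix p.natDegree p i j := by
  by_cases hj : (j : ℕ) = p.natDegree - 1
  · rw [show (j : ℕ) + 1 = p.natDegree by omega, hp.X_pow_natDegree_modByMonic, coeff_sub,
      coeff_X_pow, companionMatrix, of_apply, if_pos hj, if_neg i.isLt.ne, zero_sub]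
  · have hlt : (X ^ ((j : ℕ) + 1) : F[X]).degree < p.degree := by
      rw [degree_X_pow, degree_eq_natDegree hp.ne_zero]
      exact_mod_cast (by omega : (j : ℕ) + 1 < p.natDegree)
    rw [companionMatrix_apply_of_ne p hj, (modByMonic_eq_self_iff hp).2 hlt, coeff_X_pow]

theorem leftMulMatrix_root_eq_companionMatrix (hp : p.Monic) :
    Algebra.leftMulMatrix (AdjoinRoot.powerBasisAux' hp) (AdjoinRoot.root p) =
      companionMatrix p.natDegree p := by
  ext i j
  have hmul : AdjoinRoot.root p * AdjoinRoot.powerBasisAux' hp j =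
      AdjoinRoot.mk p (X ^ ((j : ℕ) + 1)) := by
    have hj : AdjoinRoot.powerBasisAux' hp j = AdjoinRoot.root p ^ (j : ℕ) :=
      (AdjoinRoot.powerBasis' hp).basis_eq_pow j
    rw [hj, map_pow, AdjoinRoot.mk_X, pow_succ']
  rw [Algebra.leftMulMatrix_eq_repr_mul, hmul, AdjoinRoot.powerBasisAux'_repr_apply_to_fun,
    AdjoinRoot.modByMonicHom_mk, coeff_X_pow_succ_modByMonic_eq_companionMatrix hp]

theorem charpoly_companionMatrix {d : ℕ} (hp : p.Monic) (hd : p.natDegree = d) :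
    (companionMatrix d p).charpoly = p := by
  subst hd
  have h : (Algebra.leftMulMatrix (AdjoinRoot.powerBasisAux' hp) (AdjoinRoot.root p)).charpoly =
      minpoly F (AdjoinRoot.root p) :=
    charpoly_leftMulMatrix (AdjoinRoot.powerBasis' hp)
  rwa [AdjoinRoot.minpoly_root hp.ne_zero, hp.leadingCoeff, inv_one, C_1, mul_one,
    leftMulMatrix_root_eq_companionMatrix hp] at h

end Companion

def Equiv.sigmaSumCompl {ι : Type*} (P : ι → Prop) [DecidablePred P] (β : ι → Type*) :
    (Σ i : {i // P i}, β i) ⊕ (Σ i : {i // ¬P i}, β i) ≃ Σ i, β i where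
  toFun := Sum.elim (fun a => ⟨a.1, a.2⟩) (fun a => ⟨a.1, a.2⟩)
  invFun a := if h : P a.1 then .inl ⟨⟨a.1, h⟩, a.2⟩ else .inr ⟨⟨a.1, h⟩, a.2⟩
  left_inv := by rintro (⟨⟨i, hi⟩, x⟩ | ⟨⟨i, hi⟩, x⟩) <;> simp [hi]
  right_inv a := by by_cases h : P a.1 <;> simp [h]

namespace Matrix

section BlockDiagonal

variable {R : Type*} [CommRing R] {ι : Type*} [DecidableEq ι] {β : ι → Type*}

theorem blockDiagonal'_submatrix_sigmaSumCompl (P : ι → Prop) [DecidablePred P]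
    (M : ∀ i, Matrix (β i) (β i) R) :
    (blockDiagonal' M).submatrix (Equiv.sigmaSumCompl P β) (Equiv.sigmaSumCompl P β) =
      fromBlocks (blockDiagonal' fun i : {i // P i} => M i) 0 0
        (blockDiagonal' fun i : {i // ¬P i} => M i) := by
  ext (⟨⟨i, hi⟩, x⟩ | ⟨⟨i, hi⟩, x⟩) (⟨⟨j, hj⟩, y⟩ | ⟨⟨j, hj⟩, y⟩)
  · simp [Equiv.sigmaSumCompl, blockDiagonal'_apply]
  · exact blockDiagonal'_apply_ne M _ _ fun h : i = j => hj (h ▸ hi)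
  · exact blockDiagonal'_apply_ne M _ _ fun h : i = j => hi (h ▸ hj)
  · simp [Equiv.sigmaSumCompl, blockDiagonal'_apply]

variable [Fintype ι] [∀ i, Fintype (β i)] [∀ i, DecidableEq (β i)]

theorem det_blockDiagonal' (M : ∀ i, Matrix (β i) (β i) R) :
    (blockDiagonal' M).det = ∏ i, (M i).det := by
  let _ : LinearOrder ι := LinearOrder.lift' _ (Fintype.equivFin ι).injective
  rw [(blockTriangular_blockDiagonal' M).det_fintype]
  refine prod_congr rfl fun k _ => ?_
  have hblock : (blockDiagonal' M).toSquareBlock Sigma.fst k =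
      (M k).submatrix (Equiv.sigmaSubtype k) (Equiv.sigmaSubtype k) := by
    ext ⟨⟨i, x⟩, hi⟩ ⟨⟨j, y⟩, hj⟩
    dsimp only at hi hj
    subst hi hj
    exact blockDiagonal'_apply_eq M _ x y
  rw [hblock, det_submatrix_equiv_self]

theorem charmatrix_blockDiagonal' (M : ∀ i, Matrix (β i) (β i) R) :
    charmatrix (blockDiagonal' M) = blockDiagonal' fun i => charmatrix (M i) := by
  ext ⟨i, x⟩ ⟨j, y⟩
  by_cases hij : i = j
  · subst hij
    by_cases hxy : x = y <;> simp [hxy]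
  · simp [hij, blockDiagonal'_apply_ne]

theorem charpoly_blockDiagonal' (M : ∀ i, Matrix (β i) (β i) R) :
    (blockDiagonal' M).charpoly = ∏ i, (M i).charpoly := by
  rw [charpoly, charmatrix_blockDiagonal', det_blockDiagonal']
  rfl

end BlockDiagonal

theorem charpoly_submatrix_equiv {R : Type*} [CommRing R] {m n : Type*} [Fintype m] [Fintype n]
    [DecidableEq m] [DecidableEq n] (M : Matrix n n R) (e : m ≃ n) :
    (M.submatrix e e).charpoly = M.charpoly :=
  charpoly_reindex e.symm M

section Rank

variable {K : Type*} [Field K] {m n : Type*}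

theorem rank_le_card_of_forall_notMem_col_eq_zero [Fintype n] (M : Matrix m n K) (t : Finset n)
    (h : ∀ j ∉ t, ∀ i, M i j = 0) : M.rank ≤ #t := by
  classical
  have hM : M = M * diagonal fun j => if j ∈ t then (1 : K) else 0 := by
    ext i j
    by_cases hj : j ∈ t <;> simp [hj, h j]
  rw [hM]
  refine (rank_mul_le_right _ _).trans ?_
  rw [rank_diagonal]
  simp

theorem rank_fromBlocks_zero_zero_zero_le {m' n' : Type*} [Fintype n] [Fintype m'] [Fintype n']
    [DecidableEq m'] [DecidableEq n'] (X : Matrix m' n' K) :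
    (fromBlocks (0 : Matrix m n K) 0 0 X).rank ≤ X.rank := by
  have hX : fromBlocks (0 : Matrix m n K) 0 0 X =
      fromRows (0 : Matrix m m' K) 1 * X * fromCols (0 : Matrix n' n K) 1 := by
    rw [fromRows_mul, fromRows_mul_fromCols]
    ext (i | i) (j | j) <;> simp
  rw [hX]
  exact (rank_mul_le_left _ _).trans (rank_mul_le_right _ _)

end Rank

end Matrix

theorem Sigma.Lex.toLex_mk_covBy_toLex_mk {ι : Type*} [Preorder ι] {β : ι → Type*}
    [∀ i, Preorder (β i)] {i : ι} {a b : β i} (h : a ⋖ b) :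
    toLex (⟨i, a⟩ : Σ i, β i) ⋖ toLex ⟨i, b⟩ := by
  refine ⟨Sigma.Lex.right _ _ h.lt, fun c hac hcb => ?_⟩
  obtain ⟨k, z⟩ := c
  rcases hac with ⟨_, _, hik⟩ | ⟨_, _, haz⟩
  · rcases hcb with ⟨_, _, hki⟩ | ⟨_, _, _⟩
    · exact lt_asymm hik hki
    · exact lt_irrefl _ hik
  · rcases hcb with ⟨_, _, hki⟩ | ⟨_, _, hzb⟩
    · exact lt_irrefl _ hki
    · exact h.2 haz hzb

section MergeBlocks

variable {F : Type*} [Field F] {ι : Type*} [LinearOrder ι] {d : ι → ℕ} {D : ℕ}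

theorem val_orderIso_toLex_mk_succ (τ : (Σₗ i, Fin (d i)) ≃o Fin D) {i : ι} (y : Fin (d i))
    (hy : (y : ℕ) + 1 < d i) :
    (τ (toLex ⟨i, ⟨y + 1, hy⟩⟩) : ℕ) = τ (toLex ⟨i, y⟩) + 1 := by
  have hcov : y ⋖ (⟨y + 1, hy⟩ : Fin (d i)) := by
    rw [Fin.covBy_iff, Nat.covBy_iff_add_one_eq]
  have hτ := (apply_covBy_apply_iff τ).2 (Sigma.Lex.toLex_mk_covBy_toLex_mk hcov)
  rw [Fin.covBy_iff, Nat.covBy_iff_add_one_eq] at hτ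
  exact hτ.symm

theorem companionMatrix_submatrix_apply_of_succ_lt (τ : (Σₗ i, Fin (d i)) ≃o Fin D) (h : F[X])
    (f : ι → F[X]) (a : Σ i, Fin (d i)) {j : ι} (y : Fin (d j)) (hy : (y : ℕ) + 1 < d j) :
    (companionMatrix D h).submatrix (τ ∘ toLex) (τ ∘ toLex) a ⟨j, y⟩ =
      blockDiagonal' (fun i => companionMatrix (d i) (f i)) a ⟨j, y⟩ := by
  have hsucc := val_orderIso_toLex_mk_succ τ y hy
  have hlast : (τ (toLex ⟨j, y⟩) : ℕ) ≠ D - 1 := by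
    have := (τ (toLex ⟨j, ⟨y + 1, hy⟩⟩)).isLt
    omega
  rw [submatrix_apply, Function.comp_apply, Function.comp_apply,
    companionMatrix_apply_of_ne h hlast, ← hsucc]
  simp only [Fin.val_inj, EmbeddingLike.apply_eq_iff_eq]
  obtain ⟨i, x⟩ := a
  by_cases hij : i = j
  · subst hij
    rw [blockDiagonal'_apply_eq, companionMatrix_apply_of_ne _ (by omega)]
    simp [Fin.ext_iff]
  · rw [blockDiagonal'_apply_ne _ _ _ hij, if_neg (fun hc => hij (congrArg Sigma.fst hc))]

theorem rank_companionMatrix_submatrix_sub_blockDiagonal'_le [Fintype ι]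
    (τ : (Σₗ i, Fin (d i)) ≃o Fin D) (h : F[X]) (f : ι → F[X]) :
    ((companionMatrix D h).submatrix (τ ∘ toLex) (τ ∘ toLex) -
      blockDiagonal' fun i => companionMatrix (d i) (f i)).rank ≤ Fintype.card ι := by
  set lastCols := univ.filter fun b : Σ i, Fin (d i) => (b.2 : ℕ) + 1 = d b.1
  have hcard : #lastCols ≤ Fintype.card ι := by
    refine card_le_card_of_injOn Sigma.fst (fun _ _ => mem_univ _) ?_
    rintro ⟨i, x⟩ hx ⟨j, y⟩ hy (rfl : i = j)
    simp only [lastCols, coe_filter, mem_univ, true_and, Set.mem_ofPred_eq] at hx hy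
    rw [Fin.ext (by omega : x = (y : ℕ))]
  refine (rank_le_card_of_forall_notMem_col_eq_zero _ lastCols ?_).trans hcard
  rintro ⟨j, y⟩ hy a
  simp only [lastCols, mem_filter, mem_univ, true_and] at hy
  rw [Matrix.sub_apply, sub_eq_zero,
    companionMatrix_submatrix_apply_of_succ_lt τ h f a y (by omega)]

end MergeBlocks

theorem exists_rank_le_charpoly_blockDiagonal'_add {F : Type*} [Field F] {ι : Type*} [Fintype ι]
    [LinearOrder ι] (f : ι → F[X]) (hf : ∀ i, (f i).Monic) (P : ι → Prop) [DecidablePred P]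
    {h : F[X]} (hh : h.Monic) (hdeg : h.natDegree = ∑ i ∈ univ.filter (¬P ·), (f i).natDegree) :
    ∃ B, B.rank ≤ Fintype.card {i // ¬P i} ∧
      (blockDiagonal' (fun i => companionMatrix (f i).natDegree (f i)) + B).charpoly =
        (∏ i ∈ univ.filter P, f i) * h := by
  set E := Equiv.sigmaSumCompl P fun i => Fin (f i).natDegree
  set τ := (monoEquivOfFin (Σₗ i : {i // ¬P i}, Fin (f i).natDegree) rfl).symm
  set tail := (companionMatrix _ h).submatrix (τ ∘ toLex) (τ ∘ toLex)
  set N := tail - blockDiagonal' fun i : {i // ¬P i} => companionMatrix (f i).natDegree (f i)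
  refine ⟨(fromBlocks 0 0 0 N).submatrix E.symm E.symm, ?_, ?_⟩
  · rw [rank_submatrix]
    exact (rank_fromBlocks_zero_zero_zero_le N).trans
      (rank_companionMatrix_submatrix_sub_blockDiagonal'_le τ h _)
  have hblocks : (blockDiagonal' (fun i => companionMatrix (f i).natDegree (f i)) +
      (fromBlocks 0 0 0 N).submatrix E.symm E.symm).submatrix E E =
      fromBlocks (blockDiagonal' fun i : {i // P i} => companionMatrix (f i).natDegree (f i)) 0 0
        tail := by
    rw [submatrix_add, Pi.add_apply, Pi.add_apply, blockDiagonal'_submatrix_sigmaSumCompl,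
      submatrix_submatrix, Equiv.symm_comp_self, submatrix_id_id, fromBlocks_add]
    simp [N]
  have hhead : (blockDiagonal' fun i : {i // P i} =>
      companionMatrix (f i).natDegree (f i)).charpoly = ∏ i ∈ univ.filter P, f i := by
    rw [charpoly_blockDiagonal', prod_subtype (p := P) (univ.filter P) (by simp) f]
    exact prod_congr rfl fun i _ => charpoly_companionMatrix (hf i) rfl
  have htail : tail.charpoly = h := by
    refine (charpoly_submatrix_equiv _ (toLex.trans τ.toEquiv)).trans
      (charpoly_companionMatrix hh ?_)
    rw [hdeg, Fintype.card_lex, Fintype.card_sigma]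
    simp only [Fintype.card_fin]
    exact sum_subtype _ (by simp) _
  rw [← charpoly_submatrix_equiv _ E, hblocks, charpoly_fromBlocks_zero₁₂, hhead, htail]

theorem Fintype.card_fin_not_lt_sub_le (s m : ℕ) :
    Fintype.card {i : Fin s // ¬(i : ℕ) < s - m} ≤ m := by
  rw [Fintype.card_subtype_compl, Fintype.card_fin, Fintype.card_fin_lt_of_le (Nat.sub_le s m)]
  omega

theorem stmt_14_general {F : Type*} [Field F] {n s m : ℕ}
    (p : Fin s → Polynomial F) (hmon : ∀ i, (p i).Monic)
    (A : Matrix (Fin n) (Fin n) F)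
    (e : (Σ i : Fin s, Fin ((p i).natDegree)) ≃ Fin n)
    (P : Matrix (Fin n) (Fin n) F) (hP : IsUnit P.det)
    (hA : A = P * Matrix.reindex e e
      (Matrix.blockDiagonal' fun i => companionMatrix ((p i).natDegree) (p i)) * P⁻¹)
    (q : Polynomial F) (hq : q.Monic) (hqdeg : q.natDegree = n)
    (hdvdq : (∏ i ∈ Finset.univ.filter (fun i : Fin s => (i : ℕ) < s - m), p i) ∣ q) :
    ∃ B : Matrix (Fin n) (Fin n) F, B.rank ≤ m ∧ (A + B).charpoly = q := by
  obtain ⟨h, rfl⟩ := hdvdq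
  have hg : (∏ i ∈ univ.filter (fun i : Fin s => (i : ℕ) < s - m), p i).Monic :=
    monic_prod_of_monic _ _ fun i _ => hmon i
  have hh : h.Monic := hg.of_mul_monic_left hq
  have hdeg : h.natDegree = ∑ i ∈ univ.filter (fun i : Fin s => ¬(i : ℕ) < s - m),
      (p i).natDegree := by
    have hn : ∑ i, (p i).natDegree = n := by simpa using Fintype.card_congr e
    rw [hg.natDegree_mul hh, natDegree_prod_of_monic _ _ fun i _ => hmon i] at hqdeg
    rw [← sum_filter_add_sum_filter_not univ (fun i : Fin s => (i : ℕ) < s - m)] at hn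
    omega
  obtain ⟨B, hBrank, hB⟩ := exists_rank_le_charpoly_blockDiagonal'_add p hmon _ hh hdeg
  have hPunit : IsUnit P := (isUnit_iff_isUnit_det P).2 hP
  refine ⟨P * reindex e e B * P⁻¹, ?_, ?_⟩
  · calc (P * reindex e e B * P⁻¹).rank ≤ (reindex e e B).rank :=
          (rank_mul_le_left _ _).trans (rank_mul_le_right _ _)
      _ ≤ m := (rank_reindex e e B).trans_le (hBrank.trans (Fintype.card_fin_not_lt_sub_le s m))
  · have hconj := charpoly_units_conj hPunit.unit
      (reindex e e (blockDiagonal' (fun i => companionMatrix (p i).natDegree (p i)) + B))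
    rw [IsUnit.unit_spec, charpoly_reindex, hB] at hconj
    rw [hA, ← add_mul, ← mul_add]
    exact hconj

/-- Let `A` be an `n×n` matrix over a field `F` whose rational canonical form has invariant
factors `p 0 ∣ p 1 ∣ ⋯ ∣ p (s-1)`, let `m ≥ 1`, and let `q` be monic of degree `n` with
`p 0 · p 1 ⋯ p (s-m-1) ∣ q`.  Then there is an `n×n` matrix `B` over `F` with `rank B ≤ m`
and `charpoly (A + B) = q`. -/
theorem stmt_14 {F : Type*} [Field F] {n s m : ℕ} (hm : 1 ≤ m)
    (p : Fin s → Polynomial F) (hmon : ∀ i, (p i).Monic)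
    (hdeg : ∀ i, 1 ≤ (p i).natDegree)
    (hdvd : ∀ i j : Fin s, i ≤ j → p i ∣ p j)
    (A : Matrix (Fin n) (Fin n) F)
    (e : (Σ i : Fin s, Fin ((p i).natDegree)) ≃ Fin n)
    (P : Matrix (Fin n) (Fin n) F) (hP : IsUnit P.det)
    (hA : A = P * Matrix.reindex e e
      (Matrix.blockDiagonal' fun i => companionMatrix ((p i).natDegree) (p i)) * P⁻¹)
    (q : Polynomial F) (hq : q.Monic) (hqdeg : q.natDegree = n)
    (hdvdq : (∏ i ∈ Finset.univ.filter (fun i : Fin s => (i : ℕ) < s - m), p i) ∣ q) :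
    ∃ B : Matrix (Fin n) (Fin n) F, B.rank ≤ m ∧ (A + B).charpoly = q :=
  stmt_14_general p hmon A e P hP hA q hq hqdeg hdvdq
end

section
/- Let A be an n×n matrix over a field F obtained by replacing, in the block-diagonal matrix diag(C(p_s), C(p_{s−1}), ..., C(p_1)) of companion matrices, the top-left block diag(C(p_s), ..., C(p_{s−m+1})) (of total size δ_m = deg p_s + ... + deg p_{s−m+1}) by the companion matrix C(h) of a monic polynomial h of degree δ_m. Then the resulting matrix differs from the original in at most m columns, hence their difference has rank at most m, and the resulting matrix has characteristic polynomial h·p_{s−m}···p_1. -/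
open Polynomial Matrix

theorem Matrix.charpoly_blockDiagonal'_s15 {R : Type*} [CommRing R] {o : Type*} [Fintype o]
    [DecidableEq o] {m : o → Type*} [∀ i, Fintype (m i)] [∀ i, DecidableEq (m i)]
    (M : ∀ i, Matrix (m i) (m i) R) :
    (blockDiagonal' M).charpoly = ∏ i, (M i).charpoly := by
  let : LinearOrder o := LinearOrder.lift' _ (Fintype.equivFin o).injective
  rw [charpoly, (blockTriangular_blockDiagonal' M).charmatrix.det_fintype]
  refine Finset.prod_congr rfl fun k _ => ?_
  rw [← charmatrix_toSquareBlock, ← charpoly, ← charpoly_reindex (Equiv.sigmaSubtype k)]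
  congr
  ext x y
  exact blockDiagonal'_apply_eq M k x y

theorem Matrix.rank_le_card_of_forall_notMem_col_eq_zero_s15 {K : Type*} [Field K] {m n : Type*}
    [Fintype m] [Fintype n] [DecidableEq n] (A : Matrix m n K) (S : Finset n)
    (hA : ∀ j ∉ S, ∀ i, A i j = 0) : A.rank ≤ S.card := by
  classical
  have hproj : A = A * diagonal (fun j => if j ∈ S then (1 : K) else 0) := by
    ext i j
    by_cases hj : j ∈ S <;> simp [hj, hA j]
  calc A.rank ≤ (diagonal fun j => if j ∈ S then (1 : K) else 0).rank := by
        rw [hproj]; exact rank_mul_le_right _ _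
    _ = S.card := by simp [rank_diagonal]

section

variable {F : Type*} [Field F]

theorem coeff_X_pow_succ_modByMonic {q : F[X]} (hq : q.Monic) {j : ℕ} (hj : j < q.natDegree)
    {i : ℕ} (hi : i < q.natDegree) :
    (X ^ (j + 1) %ₘ q).coeff i =
      if j = q.natDegree - 1 then -q.coeff i else if i = j + 1 then 1 else 0 := by
  have hdeg : q.degree = q.natDegree := degree_eq_natDegree hq.ne_zero
  split_ifs with hlast hsucc
  · have hd : j + 1 = q.natDegree := by omega
    have hlt : (X ^ (j + 1) - q).degree < q.degree :=
      degree_sub_lt_right (by rw [hd, degree_X_pow, hdeg]) hq.ne_zero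
        (by rw [leadingCoeff_X_pow, hq.leadingCoeff])
    rw [((div_modByMonic_unique 1 _ hq ⟨by ring, hlt⟩).2), coeff_sub, coeff_X_pow,
      if_neg (by omega), zero_sub]
  all_goals
    rw [(modByMonic_eq_self_iff hq).mpr (by rw [degree_X_pow, hdeg]; exact_mod_cast (by omega)),
      coeff_X_pow]
  · rw [if_pos hsucc]
  · rw [if_neg hsucc]

theorem companionMatrix_eq_leftMulMatrix {q : F[X]} (hq : q.Monic) :
    companionMatrix q.natDegree q =
      Algebra.leftMulMatrix (AdjoinRoot.powerBasisAux' hq) (AdjoinRoot.root q) := by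
  ext i j
  have hbasis : AdjoinRoot.powerBasisAux' hq j = AdjoinRoot.root q ^ (j : ℕ) :=
    (AdjoinRoot.powerBasis' hq).basis_eq_pow j
  rw [Algebra.leftMulMatrix_eq_repr_mul, hbasis, ← pow_succ', ← AdjoinRoot.mk_X, ← map_pow,
    AdjoinRoot.powerBasisAux'_repr_apply_to_fun, AdjoinRoot.modByMonicHom_mk]
  exact (coeff_X_pow_succ_modByMonic hq j.2 i.2).symm

theorem charpoly_companionMatrix_s15 {q : F[X]} (hq : q.Monic) :
    (companionMatrix q.natDegree q).charpoly = q := by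
  rw [companionMatrix_eq_leftMulMatrix hq]
  refine (charpoly_leftMulMatrix (AdjoinRoot.powerBasis' hq)).trans ?_
  rw [AdjoinRoot.powerBasis'_gen, AdjoinRoot.minpoly_root hq.ne_zero, hq.leadingCoeff, inv_one,
    C_1, mul_one]

section BlockOffset

variable {k : ℕ}

def blockOffset (Q : Fin k → F[X]) (t : ℕ) : ℕ :=
  ∑ j ∈ Finset.univ.filter (fun j : Fin k => (j : ℕ) < t), (Q j).natDegree

variable (Q : Fin k → F[X])

theorem blockOffset_zero : blockOffset Q 0 = 0 := by
  simp [blockOffset]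

theorem blockOffset_succ (i : Fin k) :
    blockOffset Q (i + 1) = blockOffset Q i + (Q i).natDegree := by
  have : Finset.univ.filter (fun j : Fin k => (j : ℕ) < i + 1) =
      insert i (Finset.univ.filter (fun j : Fin k => (j : ℕ) < i)) := by
    ext j
    simp only [Finset.mem_insert, Finset.mem_filter, Finset.mem_univ, true_and, Fin.ext_iff]
    omega
  rw [blockOffset, this, Finset.sum_insert (by simp), add_comm]
  rfl

theorem blockOffset_mono : Monotone (blockOffset Q) := fun _ _ hab =>
  Finset.sum_le_sum_of_subset fun j hj => by
    simp only [Finset.mem_filter, Finset.mem_univ, true_and] at hj ⊢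
    omega

theorem blockOffset_add_le {i j : Fin k} (hij : i < j) :
    blockOffset Q i + (Q i).natDegree ≤ blockOffset Q j :=
  blockOffset_succ Q i ▸ blockOffset_mono Q (Nat.succ_le_of_lt hij)

/-- Merging blocks `0, …, m - 1` of `q` into the single block `0` of `Q` leaves the positions of
the later blocks unchanged. -/
theorem blockOffset_merge {s m : ℕ} (q : Fin s → F[X]) (Q : Fin (s - m + 1) → F[X])
    (hQ0 : (Q 0).natDegree = blockOffset q m)
    (hQ : ∀ (j : Fin (s - m + 1)) (i : Fin s), 0 < (j : ℕ) → (i : ℕ) = m + j - 1 → Q j = q i)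
    (t : ℕ) (ht : t < s - m + 1) : blockOffset Q (t + 1) = blockOffset q (m + t) := by
  induction t with
  | zero => rw [blockOffset_succ Q ⟨0, ht⟩, blockOffset_zero]; simpa using hQ0
  | succ t ih =>
    rw [blockOffset_succ Q ⟨t + 1, ht⟩, ih (by omega), ← add_assoc,
      hQ ⟨t + 1, ht⟩ ⟨m + t, by omega⟩ (by simp) (by simp)]
    exact (blockOffset_succ q ⟨m + t, by omega⟩).symm

end BlockOffset

section BlockCompanion

def blockCompanion {k n : ℕ} (Q : Fin k → F[X]) (e : (Σ i, Fin (Q i).natDegree) ≃ Fin n) :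
    Matrix (Fin n) (Fin n) F :=
  reindex e e (blockDiagonal' fun i => companionMatrix (Q i).natDegree (Q i))

theorem charpoly_blockCompanion {k n : ℕ} {Q : Fin k → F[X]} (hQ : ∀ i, (Q i).Monic)
    (e : (Σ i, Fin (Q i).natDegree) ≃ Fin n) : (blockCompanion Q e).charpoly = ∏ i, Q i := by
  rw [blockCompanion, charpoly_reindex, charpoly_blockDiagonal'_s15]
  exact Finset.prod_congr rfl fun i _ => charpoly_companionMatrix_s15 (hQ i)

variable {k n : ℕ} {Q : Fin k → F[X]} {e : (Σ i, Fin (Q i).natDegree) ≃ Fin n}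
  (he : ∀ i x, (e ⟨i, x⟩ : ℕ) = blockOffset Q i + x)
include he

theorem fst_symm_eq_iff (a : Fin n) (i : Fin k) :
    (e.symm a).1 = i ↔ blockOffset Q i ≤ a ∧ a < blockOffset Q i + (Q i).natDegree := by
  obtain ⟨⟨i', x⟩, rfl⟩ := e.surjective a
  rw [Equiv.symm_apply_apply, he]
  have hx := x.2
  refine ⟨fun h => ?_, fun ⟨hlo, hhi⟩ => ?_⟩
  · obtain rfl : i' = i := h
    omega
  rcases lt_trichotomy i' i with hlt | heq | hgt
  · have := blockOffset_add_le Q hlt; omega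
  · exact heq
  · have := blockOffset_add_le Q hgt; omega

theorem blockCompanion_apply {i : Fin k} {c : Fin n}
    (hc : blockOffset Q i ≤ c ∧ c < blockOffset Q i + (Q i).natDegree) (a : Fin n) :
    blockCompanion Q e a c =
      if (c : ℕ) + 1 = blockOffset Q i + (Q i).natDegree then
        if blockOffset Q i ≤ a ∧ a < blockOffset Q i + (Q i).natDegree then
          -(Q i).coeff (a - blockOffset Q i)
        else 0
      else if (a : ℕ) = c + 1 then 1 else 0 := by
  have hci := (fst_symm_eq_iff he c i).mpr hc
  have hai := fst_symm_eq_iff he a i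
  obtain ⟨⟨i', y⟩, rfl⟩ := e.surjective a
  obtain ⟨⟨i₀, x⟩, rfl⟩ := e.surjective c
  obtain rfl : i₀ = i := by simpa using hci
  have hx := x.2
  have hy := y.2
  rw [blockCompanion, reindex_apply, submatrix_apply, Equiv.symm_apply_apply,
    Equiv.symm_apply_apply]
  simp only [Equiv.symm_apply_apply, he] at hai ⊢
  by_cases hii : i' = i₀
  · subst hii
    rw [blockDiagonal'_apply_eq, companionMatrix, of_apply, Nat.add_sub_cancel_left]
    split_ifs <;> first | rfl | omega
  · rw [blockDiagonal'_apply_ne _ _ _ hii]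
    have := mt hai.mpr hii
    split_ifs <;> first | rfl | omega

end BlockCompanion

section Merge

variable {s m n : ℕ} {q : Fin s → F[X]} {Q : Fin (s - m + 1) → F[X]}
  (hQ0 : (Q 0).natDegree = blockOffset q m)
  (hQ : ∀ (j : Fin (s - m + 1)) (i : Fin s), 0 < (j : ℕ) → (i : ℕ) = m + j - 1 → Q j = q i)
include hQ

theorem prod_eq_mul_prod_filter_le :
    ∏ j, Q j = Q 0 * ∏ i ∈ Finset.univ.filter (fun i : Fin s => m ≤ (i : ℕ)), q i := by
  rw [Fin.prod_univ_succ]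
  congr 1
  refine Finset.prod_bij' (fun j _ => (⟨m + j, by omega⟩ : Fin s))
    (fun i hi => ⟨i - m, by simp at hi; omega⟩) (fun j _ => by simp)
    (fun i _ => Finset.mem_univ _)
    (fun j _ => Fin.ext (by simp)) (fun i hi => Fin.ext (by simp at hi ⊢; omega))
    (fun j _ => hQ _ _ (by simp) (by simp))

include hQ0

theorem blockCompanion_merge_apply {e : (Σ i, Fin (q i).natDegree) ≃ Fin n}
    {e₂ : (Σ j, Fin (Q j).natDegree) ≃ Fin n}
    (he : ∀ i x, (e ⟨i, x⟩ : ℕ) = blockOffset q i + x)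
    (he₂ : ∀ j x, (e₂ ⟨j, x⟩ : ℕ) = blockOffset Q j + x) {c : Fin n}
    (hc : ∀ i : Fin s, (i : ℕ) < m → (c : ℕ) + 1 ≠ blockOffset q i + (q i).natDegree)
    (a : Fin n) :
    blockCompanion Q e₂ a c = blockCompanion q e a c := by
  set i := (e.symm c).1
  have hci := (fst_symm_eq_iff he c i).mp rfl
  rw [blockCompanion_apply he hci]
  by_cases him : (i : ℕ) < m
  · have hlast := hc i him
    have hle : blockOffset q i + (q i).natDegree ≤ blockOffset q m :=
      blockOffset_succ q i ▸ blockOffset_mono q him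
    have hc0 : blockOffset Q (0 : Fin (s - m + 1)) ≤ c ∧
        c < blockOffset Q (0 : Fin (s - m + 1)) + (Q 0).natDegree := by
      rw [Fin.val_zero, blockOffset_zero, hQ0]; omega
    rw [blockCompanion_apply he₂ hc0, if_neg hlast,
      if_neg (by rw [Fin.val_zero, blockOffset_zero, hQ0]; omega)]
  · have hj : (i : ℕ) - m + 1 < s - m + 1 := by omega
    have hoff : blockOffset Q (⟨i - m + 1, hj⟩ : Fin (s - m + 1)) = blockOffset q i := by
      have := blockOffset_merge q Q hQ0 hQ (i - m) (by omega)
      rwa [Nat.add_sub_cancel' (by omega)] at this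
    have hQi : Q ⟨i - m + 1, hj⟩ = q i := hQ _ _ (by simp) (by simp; omega)
    rw [blockCompanion_apply he₂ (by rw [hoff, hQi]; exact hci), hoff, hQi]

end Merge

theorem card_filter_exists_add_one_eq_le {s m n : ℕ} (f : Fin s → ℕ) :
    (Finset.univ.filter fun c : Fin n =>
      ∃ i : Fin s, (i : ℕ) < m ∧ (c : ℕ) + 1 = f i).card ≤ m := by
  calc _ ≤ ((Finset.univ.filter fun i : Fin s => (i : ℕ) < m).image f).card := by
        refine Finset.card_le_card_of_injOn (fun c : Fin n => (c : ℕ) + 1) (fun c hc => ?_)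
          (fun c _ c' _ h => Fin.ext (by simpa using h))
        obtain ⟨i, him, hci⟩ := (Finset.mem_filter.mp hc).2
        exact Finset.mem_image.mpr ⟨i, by simpa using him, hci.symm⟩
    _ ≤ (Finset.univ.filter fun i : Fin s => (i : ℕ) < m).card := Finset.card_image_le
    _ ≤ m := by rw [Fin.card_filter_val_lt]; exact min_le_right _ _

end

/-- Block `i` carries `p i.rev`, so the blocks appear in decreasing order; `e` and `e₂` are the
order-preserving enumerations of the block index types. -/
theorem stmt_15_general {F : Type*} [Field F] {n s m : ℕ}
    (p : Fin s → Polynomial F) (hmon : ∀ i, (p i).Monic)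
    (h : Polynomial F) (hh : h.Monic)
    (hhdeg : h.natDegree
      = ∑ i ∈ Finset.univ.filter (fun i : Fin s => (i : ℕ) < m), (p i.rev).natDegree)
    (P : Fin (s - m + 1) → Polynomial F)
    (hP0 : ∀ i : Fin (s - m + 1), (i : ℕ) = 0 → P i = h)
    (hPs : ∀ (i : Fin (s - m + 1)) (j : Fin s),
      0 < (i : ℕ) → (j : ℕ) = m + (i : ℕ) - 1 → P i = p j.rev)
    (e : (Σ i : Fin s, Fin ((p i.rev).natDegree)) ≃ Fin n)
    (he : ∀ (i : Fin s) (x : Fin ((p i.rev).natDegree)),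
      ((e ⟨i, x⟩ : Fin n) : ℕ)
        = (∑ j ∈ Finset.univ.filter (fun j : Fin s => j < i), (p j.rev).natDegree) + x)
    (e₂ : (Σ i : Fin (s - m + 1), Fin ((P i).natDegree)) ≃ Fin n)
    (he₂ : ∀ (i : Fin (s - m + 1)) (x : Fin ((P i).natDegree)),
      ((e₂ ⟨i, x⟩ : Fin n) : ℕ)
        = (∑ j ∈ Finset.univ.filter (fun j : Fin (s - m + 1) => j < i), (P j).natDegree) + x)
    (A₀ A₁ : Matrix (Fin n) (Fin n) F)
    (hA₀ : A₀ = Matrix.reindex e e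
      (Matrix.blockDiagonal' fun i => companionMatrix ((p i.rev).natDegree) (p i.rev)))
    (hA₁ : A₁ = Matrix.reindex e₂ e₂
      (Matrix.blockDiagonal' fun i => companionMatrix ((P i).natDegree) (P i))) :
    (∃ S : Finset (Fin n), S.card ≤ m ∧ ∀ j ∉ S, ∀ i, A₁ i j = A₀ i j)
    ∧ (A₁ - A₀).rank ≤ m
    ∧ A₁.charpoly = h * ∏ i ∈ Finset.univ.filter (fun i : Fin s => m ≤ (i : ℕ)), p i.rev := by
  replace hA₀ : A₀ = blockCompanion (fun i => p i.rev) e := hA₀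
  replace hA₁ : A₁ = blockCompanion P e₂ := hA₁
  set S := Finset.univ.filter fun c : Fin n => ∃ i : Fin s, (i : ℕ) < m ∧
    (c : ℕ) + 1 = blockOffset (fun i => p i.rev) i + (p i.rev).natDegree
  have hS : S.card ≤ m := card_filter_exists_add_one_eq_le _
  have hhdeg' : (P 0).natDegree = blockOffset (fun i => p i.rev) m := hP0 0 rfl ▸ hhdeg
  have hcols : ∀ c ∉ S, ∀ a, A₁ a c = A₀ a c := fun c hc a => by
    rw [hA₀, hA₁]
    refine blockCompanion_merge_apply hhdeg' hPs he he₂ (fun i him hci => hc ?_) a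
    exact Finset.mem_filter.mpr ⟨Finset.mem_univ _, i, him, hci⟩
  have hPmon : ∀ j, (P j).Monic := fun j => by
    rcases Nat.eq_zero_or_pos j with hj | hj
    · exact hP0 j hj ▸ hh
    · exact hPs j ⟨m + j - 1, by omega⟩ hj rfl ▸ hmon _
  refine ⟨⟨S, hS, hcols⟩, ?_, ?_⟩
  · refine (rank_le_card_of_forall_notMem_col_eq_zero_s15 _ S fun c hc a => ?_).trans hS
    rw [Matrix.sub_apply, hcols c hc a, sub_self]
  · rw [hA₁, charpoly_blockCompanion hPmon, prod_eq_mul_prod_filter_le hPs, hP0 0 rfl]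

/-- Replacing, in the block diagonal matrix `diag(C(p_s), C(p_{s-1}), …, C(p_1))` (here
block `i` carries `p i.rev`, so blocks appear in decreasing order), the top-left block
`diag(C(p_s), …, C(p_{s-m+1}))` by the companion matrix of a monic polynomial `h` of the
same total degree yields a matrix that differs from the original in at most `m` columns,
hence the difference has rank at most `m`, and whose characteristic polynomial is
`h · p_{s-m} ⋯ p_1`.  The equivalences `e`, `e₂` are the order-preserving enumerations of
the block index types. -/
theorem stmt_15 {F : Type*} [Field F] {n s m : ℕ} (hm0 : 1 ≤ m) (hm : m ≤ s)
    (p : Fin s → Polynomial F) (hmon : ∀ i, (p i).Monic)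
    (hdeg : ∀ i, 1 ≤ (p i).natDegree)
    (h : Polynomial F) (hh : h.Monic)
    (hhdeg : h.natDegree
      = ∑ i ∈ Finset.univ.filter (fun i : Fin s => (i : ℕ) < m), (p i.rev).natDegree)
    (P : Fin (s - m + 1) → Polynomial F)
    (hP0 : ∀ i : Fin (s - m + 1), (i : ℕ) = 0 → P i = h)
    (hPs : ∀ (i : Fin (s - m + 1)) (j : Fin s),
      0 < (i : ℕ) → (j : ℕ) = m + (i : ℕ) - 1 → P i = p j.rev)
    (e : (Σ i : Fin s, Fin ((p i.rev).natDegree)) ≃ Fin n)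
    (he : ∀ (i : Fin s) (x : Fin ((p i.rev).natDegree)),
      ((e ⟨i, x⟩ : Fin n) : ℕ)
        = (∑ j ∈ Finset.univ.filter (fun j : Fin s => j < i), (p j.rev).natDegree) + x)
    (e₂ : (Σ i : Fin (s - m + 1), Fin ((P i).natDegree)) ≃ Fin n)
    (he₂ : ∀ (i : Fin (s - m + 1)) (x : Fin ((P i).natDegree)),
      ((e₂ ⟨i, x⟩ : Fin n) : ℕ)
        = (∑ j ∈ Finset.univ.filter (fun j : Fin (s - m + 1) => j < i), (P j).natDegree) + x)
    (A₀ A₁ : Matrix (Fin n) (Fin n) F)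
    (hA₀ : A₀ = Matrix.reindex e e
      (Matrix.blockDiagonal' fun i => companionMatrix ((p i.rev).natDegree) (p i.rev)))
    (hA₁ : A₁ = Matrix.reindex e₂ e₂
      (Matrix.blockDiagonal' fun i => companionMatrix ((P i).natDegree) (P i))) :
    (∃ S : Finset (Fin n), S.card ≤ m ∧ ∀ j ∉ S, ∀ i, A₁ i j = A₀ i j)
    ∧ (A₁ - A₀).rank ≤ m
    ∧ A₁.charpoly = h * ∏ i ∈ Finset.univ.filter (fun i : Fin s => m ≤ (i : ℕ)), p i.rev :=
  stmt_15_general p hmon h hh hhdeg P hP0 hPs e he e₂ he₂ A₀ A₁ hA₀ hA₁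
end
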